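/- Let L be an n-dimensional nilpotent Lie algebra with n ≥ 4 and dim L² = n−2. Then dim M(L) ≤ n−2. -/

import Mathlib

/-
Let `R = ker π` and fix a linear section `σ` of `π`. Since `R` is central modulo `⁅R, F⁆`, the
bracket of `F ⧸ ⁅R, F⁆` gives an alternating bilinear map `β x y = ⁅σ x, σ y⁆` on `L` satisfying
the cocycle identity `β ⁅a, b⁆ c = β a ⁅b, c⁆ - β b ⁅a, c⁆`. The image of `F²` in `F ⧸ ⁅R, F⁆`
lies in the span `B` of the values of `β` and maps onto `L²`, and the image `(R ∩ F²) ⧸ ⁅R, F⁆`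
of `R ∩ F²` lies in the kernel of that map; hence `dim M(L) + dim L² ≤ dim B`.

Let `a, b` span `L` modulo `L²` and put `d = dim L²`. Descending along the lower central series,
which terminates because `L` is nilpotent, the cocycle identity moves `β(L², L)` into
`β(a, L²) + β(b, L²)`, so `B = K β(a, b) + β(a, L²) + β(b, L²)`. At `(a, b, ⁅a, b⁆)` it reads
`β a ⁅b, ⁅a, b⁆⁆ = β b ⁅a, ⁅a, b⁆⁆`, a nontrivial linear relation: if both brackets vanished,
`L³` would lie in `L⁴`, hence vanish, and `L² = K ⁅a, b⁆` would have dimension at most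
`1 < n - 2`. So `dim B ≤ 1 + (2d - 1)`, and `dim M(L) ≤ d = n - 2`.

Mathlib's `lowerCentralSeries K L L k` is `L^(k+1)` in this notation.
-/

open Module

/-- The dimension of the Schur multiplier `M(L) = (R ∩ F²)/[R,F]` of a Lie algebra `L`,
computed from a free presentation `π : FreeLieAlgebra K X → L` (with `R = ker π` and
`F² = [F,F]`). -/
noncomputable def lieSchurMultiplierDim (K : Type) [Field K] (X : Type) {L : Type}
    [LieRing L] [LieAlgebra K L] (π : FreeLieAlgebra K X →ₗ⁅K⁆ L) : ℕ :=
  let F := FreeLieAlgebra K X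
  let R : LieIdeal K F := π.ker
  let F2 : LieIdeal K F := LieModule.lowerCentralSeries K F F 1
  Module.finrank K
    (↥((R ⊓ F2 : LieIdeal K F) : Submodule K F) ⧸
      (Submodule.comap ((R ⊓ F2 : LieIdeal K F) : Submodule K F).subtype
        ((⁅R, (⊤ : LieIdeal K F)⁆ : LieIdeal K F) : Submodule K F)))

/-- The dimension of the derived subalgebra `L² = [L,L]`. -/
noncomputable def lieDerivedDim (K : Type) [Field K] (L : Type) [LieRing L]
    [LieAlgebra K L] : ℕ :=
  Module.finrank K
    ↥((LieModule.lowerCentralSeries K L L 1 : LieSubmodule K L L) : Submodule K L)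

open Submodule LieModule

theorem Submodule.exists_span_pair_sup_eq_top {K V : Type*} [DivisionRing K] [AddCommGroup V]
    [Module K V] {N : Submodule K V} (h : finrank K (V ⧸ N) = 2) :
    ∃ a b : V, span K {a, b} ⊔ N = ⊤ := by
  have : Module.Finite K (V ⧸ N) := Module.finite_of_finrank_eq_succ h
  let e := finBasisOfFinrankEq K (V ⧸ N) h
  obtain ⟨a, ha⟩ := N.mkQ_surjective (e 0)
  obtain ⟨b, hb⟩ := N.mkQ_surjective (e 1)
  refine ⟨a, b, ?_⟩
  rw [sup_comm, ← map_mkQ_eq_top, map_span, Set.image_pair, ha, hb, eq_top_iff, ← e.span_eq]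
  exact span_mono <| by rintro _ ⟨i, rfl⟩; fin_cases i <;> simp

theorem finrank_range_sup_range_lt {K V W : Type*} [DivisionRing K] [AddCommGroup V]
    [Module K V] [AddCommGroup W] [Module K W] [FiniteDimensional K V] (f g : V →ₗ[K] W)
    {u v : V} (huv : (u, v) ≠ 0) (h : f u + g v = 0) :
    finrank K ↥(LinearMap.range f ⊔ LinearMap.range g) < 2 * finrank K V := by
  have hker : LinearMap.ker (f.coprod g) ≠ ⊥ :=
    (Submodule.ne_bot_iff _).mpr ⟨(u, v), by simpa using h, huv⟩
  have := (f.coprod g).finrank_range_add_finrank_ker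
  rw [LinearMap.range_coprod, finrank_prod] at this
  have := Submodule.finrank_eq_zero.not.mpr hker
  omega

theorem finrank_add_finrank_map_le {K V W : Type*} [DivisionRing K] [AddCommGroup V] [Module K V]
    [AddCommGroup W] [Module K W] (f : V →ₗ[K] W) {M D : Submodule K V} [FiniteDimensional K D]
    (hMD : M ≤ D) (hM : M ≤ LinearMap.ker f) :
    finrank K M + finrank K (map f D) ≤ finrank K D := by
  have := (f.domRestrict D).finrank_range_add_finrank_ker
  rw [LinearMap.range_domRestrict, LinearMap.ker_domRestrict] at this
  have : finrank K M ≤ finrank K (comap D.subtype (LinearMap.ker f)) := by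
    rw [← (comapSubtypeEquivOfLe hMD).finrank_eq]
    exact finrank_mono (comap_mono hM)
  omega

theorem finrank_quotient_comap_subtype {K V : Type*} [Ring K] [AddCommGroup V] [Module K V]
    (P J : Submodule K V) :
    finrank K (P ⧸ comap P.subtype J) = finrank K (map J.mkQ P) := by
  rw [← LinearMap.range_domRestrict, ← (J.mkQ.domRestrict P).quotKerEquivRange.finrank_eq,
    LinearMap.ker_domRestrict, ker_mkQ]

instance Submodule.finite_map₂ {K M N P : Type*} [CommRing K] [AddCommGroup M] [AddCommGroup N]
    [AddCommGroup P] [Module K M] [Module K N] [Module K P] [IsNoetherian K M] [IsNoetherian K N]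
    (f : M →ₗ[K] N →ₗ[K] P) (p : Submodule K M) (q : Submodule K N) :
    Module.Finite K (map₂ f p q) :=
  Module.Finite.iff_fg.mpr ((IsNoetherian.noetherian p).map₂ f (IsNoetherian.noetherian q))

theorem LinearMap.IsAlt.map₂_top_le {K V P : Type*} [CommRing K] [AddCommGroup V] [Module K V]
    [AddCommGroup P] [Module K P] {f : V →ₗ[K] V →ₗ[K] P} (hf : f.IsAlt) {a b : V}
    {N : Submodule K V} (h : (span K {a, b} : Submodule K V) ⊔ N = ⊤) :
    map₂ f ⊤ ⊤ ≤ (K ∙ f a b) ⊔ map₂ f (span K {a, b}) N ⊔ map₂ f N ⊤ := by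
  have hpair : map₂ f (span K {a, b}) (span K {a, b}) ≤ K ∙ f a b := by
    rw [map₂_span_span, span_le]
    rintro _ ⟨x, hx, y, hy, rfl⟩
    rcases hx with rfl | rfl <;> rcases hy with rfl | rfl
    · simp [hf.self_eq_zero]
    · exact mem_span_singleton_self _
    · exact mem_span_singleton.mpr ⟨-1, by simp [hf.neg]⟩
    · simp [hf.self_eq_zero]
  conv_lhs => rw [← h, map₂_sup_left, map₂_sup_right]
  exact sup_le_sup (sup_le_sup_right hpair _) (map₂_le_map₂_right le_top)

section LowerCentralSeries

variable {K L M : Type*} [CommRing K] [LieRing L] [LieAlgebra K L]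
  [AddCommGroup M] [Module K M] [LieRingModule L M]

theorem lie_mem_lowerCentralSeries_succ (x : L) {m : M} {k : ℕ}
    (hm : m ∈ lowerCentralSeries K L M k) : ⁅x, m⁆ ∈ lowerCentralSeries K L M (k + 1) := by
  rw [lowerCentralSeries_succ]
  exact LieSubmodule.lie_mem_lie (LieSubmodule.mem_top x) hm

variable [LieModule K L M]

theorem toSubmodule_lowerCentralSeries_succ (k : ℕ) :
    (lowerCentralSeries K L M (k + 1)).toSubmodule =
      map₂ (toEnd K L M : L →ₗ[K] Module.End K M) ⊤ (lowerCentralSeries K L M k) := by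
  rw [lowerCentralSeries_succ, LieSubmodule.lieIdeal_oper_eq_linear_span', map₂_eq_span_image2]
  simp [Set.image2]

theorem lowerCentralSeries_eq_bot_of_le_succ [IsNilpotent L M] {k : ℕ}
    (h : lowerCentralSeries K L M k ≤ lowerCentralSeries K L M (k + 1)) :
    lowerCentralSeries K L M k = ⊥ := by
  have hle : ∀ j, lowerCentralSeries K L M k ≤ lowerCentralSeries K L M (k + j) := by
    intro j
    induction j with
    | zero => rfl
    | succ j ih =>
      rw [← add_assoc, lowerCentralSeries_succ]
      exact h.trans (lowerCentralSeries_succ K L M k ▸ LieSubmodule.mono_lie_right _ ih)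
  obtain ⟨N, hN⟩ := IsNilpotent.nilpotent K L M
  exact eq_bot_iff.mpr <| (hle N).trans <| hN ▸ antitone_lowerCentralSeries K L M (by omega)

end LowerCentralSeries

section LieAlgebra

variable {K L : Type*} [CommRing K] [LieRing L] [LieAlgebra K L]

theorem isAlt_toEnd : (toEnd K L L : L →ₗ[K] Module.End K L).IsAlt := fun x => by simp

theorem toSubmodule_lowerCentralSeries_one :
    (lowerCentralSeries K L L 1).toSubmodule =
      map₂ (toEnd K L L : L →ₗ[K] Module.End K L) ⊤ ⊤ := by
  rw [toSubmodule_lowerCentralSeries_succ, lowerCentralSeries_zero, LieSubmodule.top_toSubmodule]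

theorem lie_mem_lowerCentralSeries_add_two {u v : L} {k : ℕ}
    (hu : u ∈ lowerCentralSeries K L L 1) (hv : v ∈ lowerCentralSeries K L L k) :
    ⁅u, v⁆ ∈ lowerCentralSeries K L L (k + 2) := by
  have hu' : u ∈ (lowerCentralSeries K L L 1).toSubmodule := hu
  rw [toSubmodule_lowerCentralSeries_one] at hu'
  refine (map₂_le (r := comap ((toEnd K L L : L →ₗ[K] Module.End K L).flip v)
    (lowerCentralSeries K L L (k + 2)).toSubmodule)).mpr (fun x _ y _ => ?_) hu'
  simp only [mem_comap, LinearMap.flip_apply, LieHom.coe_toLinearMap, toEnd_apply_apply,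
    LieSubmodule.mem_toSubmodule, lie_lie]
  exact sub_mem (lie_mem_lowerCentralSeries_succ x (lie_mem_lowerCentralSeries_succ y hv))
    (lie_mem_lowerCentralSeries_succ y (lie_mem_lowerCentralSeries_succ x hv))

theorem toSubmodule_lowerCentralSeries_one_le {a b : L}
    (h : span K {a, b} ⊔ (lowerCentralSeries K L L 1).toSubmodule = ⊤) :
    (lowerCentralSeries K L L 1).toSubmodule ≤
      (K ∙ ⁅a, b⁆) ⊔ (lowerCentralSeries K L L 2).toSubmodule := by
  rw [toSubmodule_lowerCentralSeries_one, toSubmodule_lowerCentralSeries_succ]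
  refine isAlt_toEnd.map₂_top_le h |>.trans ?_
  rw [sup_assoc]
  refine sup_le_sup (by simp) (sup_le (map₂_le_map₂_left le_top) ?_)
  refine map₂_le.mpr fun u hu x _ => ?_
  rw [← isAlt_toEnd.neg]
  exact neg_mem (apply_mem_map₂ _ trivial hu)

end LieAlgebra

theorem finrank_lowerCentralSeries_one_le_one {K L : Type*} [Field K] [LieRing L]
    [LieAlgebra K L] [IsNilpotent L L] {a b : L}
    (h : span K {a, b} ⊔ (lowerCentralSeries K L L 1).toSubmodule = ⊤)
    (ha : ⁅a, ⁅a, b⁆⁆ = 0) (hb : ⁅b, ⁅a, b⁆⁆ = 0) :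
    finrank K (lowerCentralSeries K L L 1).toSubmodule ≤ 1 := by
  have hab : ⁅a, b⁆ ∈ lowerCentralSeries K L L 1 :=
    lie_mem_lowerCentralSeries_succ a (LieSubmodule.mem_top b)
  have hcomm : ∀ x : L, ⁅x, ⁅a, b⁆⁆ ∈ lowerCentralSeries K L L 3 := by
    suffices ⊤ ≤ comap ((toEnd K L L : L →ₗ[K] Module.End K L).flip ⁅a, b⁆)
        (lowerCentralSeries K L L 3).toSubmodule from fun x => this trivial
    rw [← h, sup_le_iff, span_le, Set.insert_subset_iff, Set.singleton_subset_iff]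
    refine ⟨⟨?_, ?_⟩, fun u hu => lie_mem_lowerCentralSeries_add_two hu hab⟩ <;>
      simp [ha, hb]
  have h23 : lowerCentralSeries K L L 2 ≤ lowerCentralSeries K L L 3 := by
    rw [← LieSubmodule.toSubmodule_le_toSubmodule, toSubmodule_lowerCentralSeries_succ]
    refine map₂_le.mpr fun x _ y hy => ?_
    obtain ⟨_, hw, z, hz, rfl⟩ := mem_sup.mp (toSubmodule_lowerCentralSeries_one_le h hy)
    obtain ⟨c, rfl⟩ := mem_span_singleton.mp hw
    simp only [LieHom.coe_toLinearMap, toEnd_apply_apply, lie_add, lie_smul]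
    exact add_mem (smul_mem _ c (hcomm x)) (lie_mem_lowerCentralSeries_succ x hz)
  have hle : (lowerCentralSeries K L L 1).toSubmodule ≤ K ∙ ⁅a, b⁆ := by
    have := toSubmodule_lowerCentralSeries_one_le h
    rwa [lowerCentralSeries_eq_bot_of_le_succ h23, LieSubmodule.bot_toSubmodule,
      sup_bot_eq] at this
  exact (finrank_mono hle).trans (by simpa using finrank_span_le_card ({⁅a, b⁆} : Set L))

section Cocycle

variable {K L V : Type*} [CommRing K] [LieRing L] [LieAlgebra K L] [AddCommGroup V] [Module K V]
  {β : L →ₗ[K] L →ₗ[K] V} (hβ : ∀ x y z : L, β ⁅x, y⁆ z = β x ⁅y, z⁆ - β y ⁅x, z⁆)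
include hβ

theorem map₂_lowerCentralSeries_one_le (k : ℕ) :
    map₂ β (lowerCentralSeries K L L 1).toSubmodule (lowerCentralSeries K L L k).toSubmodule ≤
      map₂ β ⊤ (lowerCentralSeries K L L (k + 1)).toSubmodule := by
  refine map₂_le.mpr fun u hu y hy => ?_
  rw [toSubmodule_lowerCentralSeries_one] at hu
  have : map₂ (toEnd K L L : L →ₗ[K] Module.End K L) ⊤ ⊤ ≤
      comap (β.flip y) (map₂ β ⊤ (lowerCentralSeries K L L (k + 1)).toSubmodule) := by
    refine map₂_le.mpr fun a _ b _ => ?_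
    simp only [mem_comap, LinearMap.flip_apply, LieHom.coe_toLinearMap, toEnd_apply_apply, hβ]
    exact sub_mem (apply_mem_map₂ _ trivial (lie_mem_lowerCentralSeries_succ b hy))
      (apply_mem_map₂ _ trivial (lie_mem_lowerCentralSeries_succ a hy))
  exact this hu

theorem map₂_lowerCentralSeries_one_top_le [IsNilpotent L L] {a b : L}
    (h : span K {a, b} ⊔ (lowerCentralSeries K L L 1).toSubmodule = ⊤) :
    map₂ β (lowerCentralSeries K L L 1).toSubmodule ⊤ ≤
      map₂ β (span K {a, b}) (lowerCentralSeries K L L 1).toSubmodule := by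
  have hdescend : ∀ j k, lowerCentralSeries K L L (k + j) = ⊥ →
      map₂ β (lowerCentralSeries K L L 1).toSubmodule (lowerCentralSeries K L L k).toSubmodule ≤
        map₂ β (span K {a, b}) (lowerCentralSeries K L L 1).toSubmodule := by
    intro j
    induction j with
    | zero =>
      intro k hk
      rw [add_zero] at hk
      rw [hk, LieSubmodule.bot_toSubmodule, map₂_bot_right]
      exact bot_le
    | succ j ih =>
      intro k hk
      refine (map₂_lowerCentralSeries_one_le hβ k).trans ?_
      rw [← h, map₂_sup_left]
      exact sup_le (map₂_le_map₂_right (antitone_lowerCentralSeries K L L (by omega)))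
        (ih (k + 1) (by rwa [add_right_comm]))
  obtain ⟨N, hN⟩ := IsNilpotent.nilpotent K L L
  simpa using hdescend N 0 (by simpa using hN)

end Cocycle

section CocycleFinrank

variable {K L V : Type*} [Field K] [LieRing L] [LieAlgebra K L] [AddCommGroup V] [Module K V]
  [FiniteDimensional K L] [IsNilpotent L L] {β : L →ₗ[K] L →ₗ[K] V}
  (hβ : ∀ x y z : L, β ⁅x, y⁆ z = β x ⁅y, z⁆ - β y ⁅x, z⁆) (halt : β.IsAlt)
include hβ halt

theorem finrank_map₂_span_pair_lt {a b : L}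
    (h : span K {a, b} ⊔ (lowerCentralSeries K L L 1).toSubmodule = ⊤)
    (h2 : 2 ≤ finrank K (lowerCentralSeries K L L 1).toSubmodule) :
    finrank K (map₂ β (span K {a, b}) (lowerCentralSeries K L L 1).toSubmodule) <
      2 * finrank K (lowerCentralSeries K L L 1).toSubmodule := by
  set U := (lowerCentralSeries K L L 1).toSubmodule
  have hmem : ∀ x y : L, ⁅x, y⁆ ∈ U := fun x y =>
    lie_mem_lowerCentralSeries_succ x (LieSubmodule.mem_top y)
  have hrel : β a ⁅b, ⁅a, b⁆⁆ + β b (-⁅a, ⁅a, b⁆⁆) = 0 := by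
    rw [map_neg, ← sub_eq_add_neg, ← hβ, halt.self_eq_zero]
  have hne : (⟨⁅b, ⁅a, b⁆⁆, hmem _ _⟩, -⟨⁅a, ⁅a, b⁆⁆, hmem _ _⟩) ≠ (0 : U × U) := by
    intro h0
    simp only [Prod.mk_eq_zero, neg_eq_zero, Subtype.ext_iff, ZeroMemClass.coe_zero] at h0
    have : finrank K U ≤ 1 := finrank_lowerCentralSeries_one_le_one h h0.2 h0.1
    omega
  have hsplit : map₂ β (span K {a, b}) U =
      LinearMap.range (β a ∘ₗ U.subtype) ⊔ LinearMap.range (β b ∘ₗ U.subtype) := by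
    rw [span_insert, map₂_sup_left, map₂_span_singleton_eq_map, map₂_span_singleton_eq_map,
      LinearMap.range_comp, LinearMap.range_comp, range_subtype]
  rw [hsplit]
  exact finrank_range_sup_range_lt _ _ hne hrel

theorem finrank_map₂_top_le
    (hq : finrank K (L ⧸ (lowerCentralSeries K L L 1).toSubmodule) = 2)
    (h2 : 2 ≤ finrank K (lowerCentralSeries K L L 1).toSubmodule) :
    finrank K (map₂ β ⊤ ⊤) ≤ 2 * finrank K (lowerCentralSeries K L L 1).toSubmodule := by
  obtain ⟨a, b, h⟩ := exists_span_pair_sup_eq_top hq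
  have hle : map₂ β ⊤ ⊤ ≤
      (K ∙ β a b) ⊔ map₂ β (span K {a, b}) (lowerCentralSeries K L L 1).toSubmodule :=
    (halt.map₂_top_le h).trans
      (sup_le le_rfl (le_sup_of_le_right (map₂_lowerCentralSeries_one_top_le hβ h)))
  have := (finrank_mono hle).trans (finrank_add_le_finrank_add_finrank _ _)
  have := finrank_map₂_span_pair_lt hβ halt h h2
  have : finrank K (K ∙ β a b) ≤ 1 := by simpa using finrank_span_le_card ({β a b} : Set V)
  omega

end CocycleFinrank

section Presentation

variable {K F L : Type*} [CommRing K] [LieRing F] [LieAlgebra K F] [LieRing L] [LieAlgebra K L]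

/-- The commutator map of the central extension `F ⧸ ⁅ker π, F⁆ → L`, computed through a linear
section `σ` of `π`. -/
def liftedBracket (π : F →ₗ⁅K⁆ L) (σ : L →ₗ[K] F) :
    L →ₗ[K] L →ₗ[K] F ⧸ (⁅π.ker, ⊤⁆ : LieIdeal K F).toSubmodule :=
  ((toEnd K F F : F →ₗ[K] Module.End K F).compl₁₂ σ σ).compr₂ (mkQ _)

variable {π : F →ₗ⁅K⁆ L} {σ : L →ₗ[K] F}

theorem liftedBracket_apply (x y : L) :
    liftedBracket π σ x y = mkQ _ ⁅σ x, σ y⁆ := rfl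

theorem isAlt_liftedBracket : (liftedBracket π σ).IsAlt := fun x => by
  simp [liftedBracket_apply]

variable (hσ : ∀ x, π (σ x) = x)
include hσ

theorem liftedBracket_map_map (f g : F) : liftedBracket π σ (π f) (π g) = mkQ _ ⁅f, g⁆ := by
  have hR : ∀ r, π r = 0 → ∀ f, ⁅r, f⁆ ∈ (⁅π.ker, ⊤⁆ : LieIdeal K F) := fun r hr f =>
    LieSubmodule.lie_mem_lie (LieHom.mem_ker.mpr hr) (LieSubmodule.mem_top f)
  rw [liftedBracket_apply, mkQ_apply, mkQ_apply, Submodule.Quotient.eq]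
  have : ⁅σ (π f), σ (π g)⁆ - ⁅f, g⁆ = ⁅σ (π f) - f, σ (π g)⁆ - ⁅σ (π g) - g, f⁆ := by
    rw [sub_lie, sub_lie, ← lie_skew (σ (π g)) f, ← lie_skew g f]
    abel
  rw [this]
  exact sub_mem (hR _ (by simp [hσ]) _) (hR _ (by simp [hσ]) _)

theorem liftedBracket_lie (x y z : L) :
    liftedBracket π σ ⁅x, y⁆ z = liftedBracket π σ x ⁅y, z⁆ - liftedBracket π σ y ⁅x, z⁆ := by
  conv_lhs => rw [← hσ x, ← hσ y, ← hσ z, ← LieHom.map_lie, liftedBracket_map_map hσ, lie_lie]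
  conv_rhs => rw [← hσ x, ← hσ y, ← hσ z, ← LieHom.map_lie, ← LieHom.map_lie,
    liftedBracket_map_map hσ, liftedBracket_map_map hσ]
  rw [map_sub]

theorem map_mkQ_lowerCentralSeries_one_le :
    map (⁅π.ker, ⊤⁆ : LieIdeal K F).toSubmodule.mkQ (lowerCentralSeries K F F 1).toSubmodule ≤
      map₂ (liftedBracket π σ) ⊤ ⊤ := by
  rw [map_le_iff_le_comap, toSubmodule_lowerCentralSeries_one]
  refine map₂_le.mpr fun f _ g _ => ?_
  simpa [← liftedBracket_map_map hσ] using apply_mem_map₂ _ (mem_top (x := π f)) mem_top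

end Presentation

theorem finrank_map_mkQ_ker_inf_add_finrank_le {K F L : Type*} [Field K] [LieRing F]
    [LieAlgebra K F] [LieRing L] [LieAlgebra K L] [FiniteDimensional K L] {π : F →ₗ⁅K⁆ L}
    (hπ : Function.Surjective π) {σ : L →ₗ[K] F} (hσ : ∀ x, π (σ x) = x) :
    finrank K (map (⁅π.ker, ⊤⁆ : LieIdeal K F).toSubmodule.mkQ
          (π.ker ⊓ lowerCentralSeries K F F 1).toSubmodule) +
        finrank K (lowerCentralSeries K L L 1).toSubmodule ≤
      finrank K (map₂ (liftedBracket π σ) ⊤ ⊤) := by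
  set J := (⁅π.ker, ⊤⁆ : LieIdeal K F).toSubmodule
  have hJ : J ≤ LinearMap.ker (π : F →ₗ[K] L) := fun z hz =>
    LieHom.mem_ker.mp (LieSubmodule.lie_le_left _ _ hz)
  have hD := map_mkQ_lowerCentralSeries_one_le hσ
  have := Submodule.finiteDimensional_of_le hD
  set p := J.liftQ (π : F →ₗ[K] L) hJ
  have hker : map J.mkQ (π.ker ⊓ lowerCentralSeries K F F 1).toSubmodule ≤ LinearMap.ker p := by
    rw [map_le_iff_le_comap]
    exact fun z hz => by simpa [p] using hz.1
  have hmap : map p (map J.mkQ (lowerCentralSeries K F F 1).toSubmodule) =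
      (lowerCentralSeries K L L 1).toSubmodule := by
    rw [← map_comp, liftQ_mkQ, ← LieIdeal.coe_map_of_surjective hπ,
      LieIdeal.lowerCentralSeries_map_eq 1 hπ]
  have := finrank_add_finrank_map_le _ (map_mono inf_le_right) hker
  rw [hmap] at this
  exact this.trans (finrank_mono hD)

theorem schur_multiplier_le_of_derived_codim_two (K L : Type) [Field K] [LieRing L]
    [LieAlgebra K L] [FiniteDimensional K L] [LieModule.IsNilpotent L L] (n : ℕ)
    (hn : Module.finrank K L = n) (hn4 : 4 ≤ n) (hm : lieDerivedDim K L = n - 2) :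
    ∀ (X : Type) (π : FreeLieAlgebra K X →ₗ⁅K⁆ L), Function.Surjective π →
      lieSchurMultiplierDim K X π ≤ n - 2 := by
  intro X π hπ
  obtain ⟨σ, hσ⟩ := (π : FreeLieAlgebra K X →ₗ[K] L).exists_rightInverse_of_surjective
    (LinearMap.range_eq_top.mpr hπ)
  replace hσ : ∀ x, π (σ x) = x := LinearMap.congr_fun hσ
  replace hm : finrank K (lowerCentralSeries K L L 1).toSubmodule = n - 2 := hm
  have hq : finrank K (L ⧸ (lowerCentralSeries K L L 1).toSubmodule) = 2 := by
    have := (lowerCentralSeries K L L 1).toSubmodule.finrank_quotient_add_finrank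
    omega
  have hcount := finrank_map_mkQ_ker_inf_add_finrank_le hπ hσ
  have hbound := finrank_map₂_top_le (liftedBracket_lie hσ) isAlt_liftedBracket hq (by omega)
  have hschur : lieSchurMultiplierDim K X π =
      finrank K (map (⁅π.ker, ⊤⁆ : LieIdeal K _).toSubmodule.mkQ
        (π.ker ⊓ lowerCentralSeries K _ _ 1).toSubmodule) :=
    finrank_quotient_comap_subtype _ _
  omega
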